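/- arXiv:0811.3244 — 7 statements merged into one kernel-verified Lean document; each statement's English description precedes it below -/
import Mathlib

section
/- In a MIN-kCSP where every variable participates in at least δ·η·C(n,k-1) fragile constraints, the instance is fragile-dense: for every assignment x, variable v, and distinct values i ≠ j, b(x,v,i) + b(x,v,j) ≥ δ·C(n,k-1). -/
open Finset
open scoped Classical

/-- b(x,v,i): total (normalized) cost of k-sets containing v when v is reassigned to i. -/
noncomputable def bCSP {V D : Type*} [Fintype V] [DecidableEq V] (k : ℕ)
    (p : Finset V → (V → D) → ℝ) (x : V → D) (v : V) (i : D) : ℝ :=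
  ∑ I ∈ ((univ : Finset V).powersetCard k).filter (fun I => v ∈ I),
    p I (Function.update x v i)

/-- The MIN-kCSP objective: Obj(x) = ∑_{I ∈ binom(V,k)} p_I(x). -/
noncomputable def objCSP {V D : Type*} [Fintype V] (k : ℕ)
    (p : Finset V → (V → D) → ℝ) (x : V → D) : ℝ :=
  ∑ I ∈ (univ : Finset V).powersetCard k, p I x

/-
Each fragile constraint over a k-set I ∋ v is violated by at least one of the two
reassignments x[v ↦ i], x[v ↦ j], so it contributes at least 1/η to
b(x,v,i) + b(x,v,j); the density hypothesis supplies δ·η·C(n,k-1) such constraints.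
-/

theorem Finset.natCast_card_filter_le_sum {ι R : Type*} [AddCommMonoidWithOne R] [PartialOrder R]
    [IsOrderedAddMonoid R] (s : Finset ι) (P : ι → Prop) [DecidablePred P] (f : ι → R)
    (hf_nonneg : ∀ i ∈ s, 0 ≤ f i) (hf_one : ∀ i ∈ s, P i → 1 ≤ f i) :
    (#{i ∈ s | P i} : R) ≤ ∑ i ∈ s, f i := by
  rw [natCast_card_filter]
  refine sum_le_sum fun i hi => ?_
  split_ifs with hP
  exacts [hf_one i hi hP, hf_nonneg i hi]

theorem bCSP_add_bCSP {V D : Type*} [Fintype V] [DecidableEq V] (k : ℕ)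
    (p : Finset V → (V → D) → ℝ) (x : V → D) (v : V) (i j : D) :
    bCSP k p x v i + bCSP k p x v j =
      ∑ I ∈ ((univ : Finset V).powersetCard k).filter (fun I => v ∈ I),
        (p I (Function.update x v i) + p I (Function.update x v j)) :=
  (sum_add_distrib).symm

theorem fragile_implies_fragile_dense_general {V D : Type*} [Fintype V] [DecidableEq V]
    (k : ℕ)
    (m : Finset V → ℕ) (pc : (I : Finset V) → Fin (m I) → (V → D) → ℝ)
    (η δ : ℝ) (hη : 0 < η)
    (hpc01 : ∀ I ℓ x, pc I ℓ x = 0 ∨ pc I ℓ x = 1)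
    (Fragile : (I : Finset V) → Fin (m I) → Prop)
    (hFragile : ∀ I ℓ, Fragile I ℓ → ∀ (x : V → D) (v : V), v ∈ I →
      ∀ i j : D, i ≠ j →
        1 ≤ pc I ℓ (Function.update x v i) + pc I ℓ (Function.update x v j))
    (hdense : ∀ v : V,
      δ * η * ((Fintype.card V).choose (k - 1)) ≤
        ∑ I ∈ ((univ : Finset V).powersetCard k).filter (fun I => v ∈ I),
          (((univ : Finset (Fin (m I))).filter (fun ℓ => Fragile I ℓ)).card : ℝ)) :
    ∀ (x : V → D) (v : V) (i j : D), i ≠ j →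
      δ * ((Fintype.card V).choose (k - 1)) ≤
        bCSP k (fun I z => η⁻¹ * ∑ ℓ, pc I ℓ z) x v i +
        bCSP k (fun I z => η⁻¹ * ∑ ℓ, pc I ℓ z) x v j := by
  intro x v i j hij
  have hpc_nonneg : ∀ I ℓ z, 0 ≤ pc I ℓ z := fun I ℓ z => by
    rcases hpc01 I ℓ z with h | h <;> simp [h]
  have hfragile_count : ∀ I, v ∈ I →
      (#{ℓ | Fragile I ℓ} : ℝ) ≤
        ∑ ℓ, pc I ℓ (Function.update x v i) + ∑ ℓ, pc I ℓ (Function.update x v j) := by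
    intro I hvI
    rw [← sum_add_distrib]
    exact natCast_card_filter_le_sum _ _ _ (fun ℓ _ => add_nonneg (hpc_nonneg ..) (hpc_nonneg ..))
      fun ℓ _ hℓ => hFragile I ℓ hℓ x v hvI i j hij
  rw [bCSP_add_bCSP]
  calc δ * ((Fintype.card V).choose (k - 1) : ℝ)
      = η⁻¹ * (δ * η * (Fintype.card V).choose (k - 1)) := by field_simp
    _ ≤ η⁻¹ * ∑ I ∈ ((univ : Finset V).powersetCard k).filter (fun I => v ∈ I),
          (#{ℓ | Fragile I ℓ} : ℝ) := by gcongr; exact hdense v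
    _ ≤ _ := by
      rw [mul_sum]
      refine sum_le_sum fun I hI => ?_
      rw [← mul_add]
      gcongr
      exact hfragile_count I (mem_filter.1 hI).2

/-- if every variable participates in at least δ·η·C(n,k-1) fragile
constraints, the instance is fragile-dense: b(x,v,i)+b(x,v,j) ≥ δ·C(n,k-1) for
all assignments x, variables v and distinct values i ≠ j. -/
theorem fragile_implies_fragile_dense {V D : Type*} [Fintype V] [DecidableEq V]
    (k : ℕ) (hk : 1 ≤ k)
    (m : Finset V → ℕ) (pc : (I : Finset V) → Fin (m I) → (V → D) → ℝ)
    (η δ : ℝ) (hη : 0 < η) (hδ : 0 < δ)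
    (hpc01 : ∀ I ℓ x, pc I ℓ x = 0 ∨ pc I ℓ x = 1)
    (Fragile : (I : Finset V) → Fin (m I) → Prop)
    (hFragile : ∀ I ℓ, Fragile I ℓ → ∀ (x : V → D) (v : V), v ∈ I →
      ∀ i j : D, i ≠ j →
        1 ≤ pc I ℓ (Function.update x v i) + pc I ℓ (Function.update x v j))
    (hdense : ∀ v : V,
      δ * η * ((Fintype.card V).choose (k - 1)) ≤
        ∑ I ∈ ((univ : Finset V).powersetCard k).filter (fun I => v ∈ I),
          (((univ : Finset (Fin (m I))).filter (fun ℓ => Fragile I ℓ)).card : ℝ)) :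
    ∀ (x : V → D) (v : V) (i j : D), i ≠ j →
      δ * ((Fintype.card V).choose (k - 1)) ≤
        bCSP k (fun I z => η⁻¹ * ∑ ℓ, pc I ℓ z) x v i +
        bCSP k (fun I z => η⁻¹ * ∑ ℓ, pc I ℓ z) x v j :=
  fragile_implies_fragile_dense_general k m pc η δ hη hpc01 Fragile hFragile hdense
end

section
/- In a fragile-dense MIN-kCSP with optimal assignment x* of cost γ·C(n,k), every unclear variable v satisfies b(x*,v,x*_v) ≥ (δ/3)·C(n,k-1), and consequently the number of unclear variables is at most 3(n-k+1)γ/δ. -/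
open Finset
open scoped Classical

/-
Fragile density gives b(x*, v, j) + b(x*, v, x*_v) ≥ δ·C(n, k-1), so if x*_v does not beat
some j ≠ x*_v by the margin (δ/3)·C(n, k-1), then b(x*, v, x*_v) ≥ (δ/3)·C(n, k-1).
Summing over the unclear variables and double counting,
#unclear · (δ/3)·C(n, k-1) ≤ ∑_v b(x*, v, x*_v) = k·Obj(x*) = γ·k·C(n, k) = γ·(n-k+1)·C(n, k-1).
-/

theorem Nat.cast_mul_choose {R : Type*} [CommRing R] (n : ℕ) {k : ℕ} (hk : 1 ≤ k) :
    (k : R) * n.choose k = ((n : R) - k + 1) * n.choose (k - 1) := by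
  obtain ⟨k, rfl⟩ := Nat.exists_eq_add_of_le' hk
  rw [Nat.add_sub_cancel]
  rcases le_or_gt k n with hkn | hnk
  · have h := congrArg (Nat.cast : ℕ → R) (Nat.choose_succ_right_eq n k)
    push_cast [Nat.cast_sub hkn] at h ⊢
    linear_combination h
  · rw [Nat.choose_eq_zero_of_lt hnk, Nat.choose_eq_zero_of_lt (by omega)]
    simp

theorem sum_sum_filter_mem_powersetCard {V R : Type*} [Fintype V] [DecidableEq V] [Semiring R]
    (k : ℕ) (f : Finset V → R) :
    ∑ v : V, ∑ I ∈ (univ.powersetCard k).filter (fun I => v ∈ I), f I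
      = k * ∑ I ∈ univ.powersetCard k, f I := by
  simp only [sum_filter]
  rw [sum_comm, mul_sum]
  refine sum_congr rfl fun I hI => ?_
  rw [sum_ite_mem, univ_inter, sum_const, (mem_powersetCard.mp hI).2, nsmul_eq_mul]

section CSP

variable {V D : Type*} [Fintype V] [DecidableEq V] (k : ℕ) (p : Finset V → (V → D) → ℝ)

theorem sum_bCSP_self (x : V → D) :
    ∑ v : V, bCSP k p x v (x v) = k * objCSP k p x := by
  simp only [bCSP, Function.update_eq_self]
  exact sum_sum_filter_mem_powersetCard k (fun I => p I x)

variable {k p}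

theorem bCSP_nonneg (hp0 : ∀ I x, 0 ≤ p I x) (x : V → D) (v : V) (i : D) :
    0 ≤ bCSP k p x v i :=
  sum_nonneg fun I _ => hp0 I _

theorem le_bCSP_self_of_unclear {δ C : ℝ} {x : V → D} {v : V}
    (hdense : ∀ i j, i ≠ j → δ * C ≤ bCSP k p x v i + bCSP k p x v j)
    (hunclear : ∃ j, j ≠ x v ∧ bCSP k p x v j - δ / 3 * C ≤ bCSP k p x v (x v)) :
    δ / 3 * C ≤ bCSP k p x v (x v) := by
  obtain ⟨j, hj, hle⟩ := hunclear
  linarith [hdense j (x v) hj]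

end CSP

theorem few_unclear_general {V D : Type*} [Fintype V] [DecidableEq V] (k : ℕ)
    (hk : 1 ≤ k) (hkn : k ≤ Fintype.card V)
    (p : Finset V → (V → D) → ℝ) (hp0 : ∀ I x, 0 ≤ p I x)
    (δ γ : ℝ) (hδ : 0 < δ)
    (hdense : ∀ (x : V → D) (v : V) (i j : D), i ≠ j →
      δ * ((Fintype.card V).choose (k - 1)) ≤ bCSP k p x v i + bCSP k p x v j)
    (xs : V → D)
    (hγ : objCSP k p xs = γ * ((Fintype.card V).choose k)) :
    (∀ v : V, (∃ j, j ≠ xs v ∧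
        bCSP k p xs v j - (δ / 3) * ((Fintype.card V).choose (k - 1))
          ≤ bCSP k p xs v (xs v)) →
      (δ / 3) * ((Fintype.card V).choose (k - 1)) ≤ bCSP k p xs v (xs v)) ∧
    (((univ : Finset V).filter (fun v => ∃ j, j ≠ xs v ∧
        bCSP k p xs v j - (δ / 3) * ((Fintype.card V).choose (k - 1))
          ≤ bCSP k p xs v (xs v))).card : ℝ)
      ≤ 3 * ((Fintype.card V : ℝ) - k + 1) * γ / δ := by
  set n := Fintype.card V
  set C : ℝ := (n.choose (k - 1) : ℝ)
  have hunclear : ∀ v : V, (∃ j, j ≠ xs v ∧ bCSP k p xs v j - δ / 3 * C ≤ bCSP k p xs v (xs v)) →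
      δ / 3 * C ≤ bCSP k p xs v (xs v) := fun v =>
    le_bCSP_self_of_unclear (hdense xs v)
  refine ⟨hunclear, ?_⟩
  set U := (univ : Finset V).filter (fun v => ∃ j, j ≠ xs v ∧
      bCSP k p xs v j - δ / 3 * C ≤ bCSP k p xs v (xs v))
  have hcount : (U.card : ℝ) * (δ / 3 * C) ≤ ∑ v : V, bCSP k p xs v (xs v) := calc
    (U.card : ℝ) * (δ / 3 * C) ≤ ∑ v ∈ U, bCSP k p xs v (xs v) := by
      rw [← nsmul_eq_mul]
      exact card_nsmul_le_sum U _ _ fun v hv => hunclear v (mem_filter.mp hv).2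
    _ ≤ ∑ v : V, bCSP k p xs v (xs v) :=
      sum_le_sum_of_subset_of_nonneg (subset_univ U) fun v _ _ => bCSP_nonneg hp0 xs v _
  have hdouble : ∑ v : V, bCSP k p xs v (xs v) = γ * ((n - k + 1) * C) := by
    rw [sum_bCSP_self, hγ, mul_left_comm, Nat.cast_mul_choose n hk]
  have hC : 0 < C := Nat.cast_pos.mpr (Nat.choose_pos (by omega))
  have hbound : (U.card : ℝ) * (δ / 3) ≤ γ * (n - k + 1) :=
    le_of_mul_le_mul_right (by linarith) hC
  rw [le_div_iff₀ hδ]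
  linarith

/-- in a fragile-dense MIN-kCSP with optimum γ·C(n,k), every unclear
variable v has b(x*,v,x*_v) ≥ (δ/3)C(n,k-1), and the number of unclear variables is
at most 3(n-k+1)γ/δ. -/
theorem few_unclear {V D : Type*} [Fintype V] [DecidableEq V] (k : ℕ)
    (hk : 1 ≤ k) (hkn : k ≤ Fintype.card V)
    (p : Finset V → (V → D) → ℝ) (hp0 : ∀ I x, 0 ≤ p I x)
    (δ γ : ℝ) (hδ : 0 < δ)
    (hdense : ∀ (x : V → D) (v : V) (i j : D), i ≠ j →
      δ * ((Fintype.card V).choose (k - 1)) ≤ bCSP k p x v i + bCSP k p x v j)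
    (xs : V → D) (hopt : ∀ x : V → D, objCSP k p xs ≤ objCSP k p x)
    (hγ : objCSP k p xs = γ * ((Fintype.card V).choose k)) :
    (∀ v : V, (∃ j, j ≠ xs v ∧
        bCSP k p xs v j - (δ / 3) * ((Fintype.card V).choose (k - 1))
          ≤ bCSP k p xs v (xs v)) →
      (δ / 3) * ((Fintype.card V).choose (k - 1)) ≤ bCSP k p xs v (xs v)) ∧
    (((univ : Finset V).filter (fun v => ∃ j, j ≠ xs v ∧
        bCSP k p xs v j - (δ / 3) * ((Fintype.card V).choose (k - 1))
          ≤ bCSP k p xs v (xs v))).card : ℝ)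
      ≤ 3 * ((Fintype.card V : ℝ) - k + 1) * γ / δ :=
  few_unclear_general k hk hkn p hp0 δ γ hδ hdense xs hγ
end

section
/- Suppose assignment x⁽¹⁾ differs from the optimal x* on at most δn/(12k) variables (event E₁) and n is large enough that (n-k+1)/(k-1) ≥ n/k. Define x⁽²⁾_v = argmin_i b(x⁽¹⁾,v,i) and let C = {v : b(x⁽¹⁾,v,x⁽²⁾_v) < b(x⁽¹⁾,v,j) - δ·C(n,k-1)/6 for all j ≠ x⁽²⁾_v}. Then x⁽²⁾_v = x*_v for every v ∈ C. -/
open Finset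
open scoped Classical

/-! Suppose `x2 v ≠ x* v` and let `t ≤ δn/(12k)` be the distance from `x1` to `x*`. Replacing
`x1` by `x*` moves each `b(·, v, i)` by at most `t · C(n, k-2)`, so the local optimality
`b(x*, v, x* v) ≤ b(x*, v, x2 v)` forces the clear-cut gap `δ · C(n, k-1)/6` below
`2t · C(n, k-2)`. But `n · C(n, k-2) ≤ k · C(n, k-1)` once `k(k-2) ≤ n`, so
`2t · C(n, k-2) ≤ δ · C(n, k-1)/6`. -/

theorem card_powersetCard_filter_mem_mem_le {V : Type*} [Fintype V] [DecidableEq V] (k : ℕ)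
    {u v : V} (huv : u ≠ v) :
    #{I ∈ (univ : Finset V).powersetCard k | u ∈ I ∧ v ∈ I} ≤
      (Fintype.card V).choose (k - 2) := by
  have hsub {I : Finset V} (hI : I ∈ {I ∈ (univ : Finset V).powersetCard k | u ∈ I ∧ v ∈ I}) :
      {u, v} ⊆ I := by
    simp only [mem_filter] at hI
    exact insert_subset hI.2.1 (singleton_subset_iff.2 hI.2.2)
  calc _ ≤ #((univ : Finset V).powersetCard (k - 2)) := by
        refine card_le_card_of_injOn (· \ {u, v}) (fun I hI => ?_) (fun I hI J hJ hIJ => ?_)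
        · have hk : #I = k := (mem_powersetCard.1 (mem_filter.1 hI).1).2
          rw [mem_coe, mem_powersetCard, card_sdiff_of_subset (hsub hI), card_pair huv, hk]
          exact ⟨subset_univ _, rfl⟩
        · rw [← sdiff_union_of_subset (hsub hI), ← sdiff_union_of_subset (hsub hJ)]
          exact congrArg (· ∪ {u, v}) hIJ
    _ = _ := by rw [card_powersetCard, card_univ]

theorem Nat.mul_choose_sub_two_le {n k : ℕ} (hk : 2 ≤ k) (hn : k * (k - 2) ≤ n) :
    n * n.choose (k - 2) ≤ k * n.choose (k - 1) := by
  obtain ⟨m, rfl⟩ := Nat.exists_eq_add_of_le' hk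
  obtain ⟨r, rfl⟩ : ∃ r, n = m + r := Nat.exists_eq_add_of_le (by simp at hn; nlinarith)
  have hrec := Nat.choose_succ_right_eq (m + r) m
  have hm : m + 2 - 1 = m + 1 := rfl
  simp only [Nat.add_sub_cancel, Nat.add_sub_cancel_left, hm] at hn hrec ⊢
  refine Nat.le_of_mul_le_mul_right ?_ (Nat.succ_pos m)
  rw [mul_assoc (m + 2), hrec]
  nlinarith

section

open Function

variable {V D : Type*} [Fintype V] [DecidableEq V] (k : ℕ) (p : Finset V → (V → D) → ℝ)
  (hloc : ∀ (I : Finset V) (x y : V → D), (∀ u ∈ I, x u = y u) → p I x = p I y)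
include hloc

theorem abs_bCSP_sub_le (hp01 : ∀ I x, 0 ≤ p I x ∧ p I x ≤ 1) (y y' : V → D) (v : V) (i : D) :
    |bCSP k p y v i - bCSP k p y' v i| ≤
      #{u | y u ≠ y' u} * ((Fintype.card V).choose (k - 2) : ℝ) := by
  set S := {I ∈ (univ : Finset V).powersetCard k | v ∈ I}
  set W := ({u | y u ≠ y' u} : Finset V).erase v
  -- only the k-sets through `v` that meet `W` see a difference between `y` and `y'`
  set T := W.biUnion fun u => {I ∈ S | u ∈ I}
  have hTS : T ⊆ S := biUnion_subset.2 fun _ _ => filter_subset _ _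
  have hzero : ∀ I ∈ S, I ∉ T → p I (update y v i) - p I (update y' v i) = 0 := by
    intro I hIS hIT
    refine sub_eq_zero.2 (hloc I _ _ fun u hu => ?_)
    by_cases huv : u = v
    · simp [huv]
    · rw [update_of_ne huv, update_of_ne huv]
      by_contra hne
      exact hIT (mem_biUnion.2 ⟨u, by simp [W, huv, hne], mem_filter.2 ⟨hIS, hu⟩⟩)
  have hterm (I : Finset V) : |p I (update y v i) - p I (update y' v i)| ≤ 1 := by
    have := hp01 I (update y v i)
    have := hp01 I (update y' v i)
    rw [abs_sub_le_iff]
    constructor <;> linarith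
  have hcard : #T ≤ #W * (Fintype.card V).choose (k - 2) := by
    refine card_biUnion_le.trans (sum_le_card_nsmul _ _ _ fun u hu => ?_)
    rw [filter_filter]
    exact card_powersetCard_filter_mem_mem_le k (ne_of_mem_erase hu).symm
  calc |bCSP k p y v i - bCSP k p y' v i|
      = |∑ I ∈ T, (p I (update y v i) - p I (update y' v i))| := by
        rw [bCSP, bCSP, ← sum_sub_distrib, sum_subset hTS hzero]
    _ ≤ ∑ _I ∈ T, (1 : ℝ) := (abs_sum_le_sum_abs _ _).trans (sum_le_sum fun I _ => hterm I)
    _ ≤ #W * ((Fintype.card V).choose (k - 2) : ℝ) := by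
        rw [sum_const, nsmul_one]
        exact_mod_cast hcard
    _ ≤ _ := by
        have : (#W : ℝ) ≤ #{u | y u ≠ y' u} := by exact_mod_cast card_erase_le
        gcongr

theorem objCSP_update_eq (x : V → D) (v : V) (j : D) :
    objCSP k p (update x v j) =
      bCSP k p x v j + ∑ I ∈ {I ∈ (univ : Finset V).powersetCard k | v ∉ I}, p I x := by
  rw [objCSP, bCSP, ← sum_filter_add_sum_filter_not _ (fun I => v ∈ I)]
  refine congrArg _ (sum_congr rfl fun I hI => hloc I _ _ fun u hu => update_of_ne ?_ _ _)
  rintro rfl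
  exact (mem_filter.1 hI).2 hu

theorem bCSP_self_le_of_forall_objCSP_le {xs : V → D}
    (hopt : ∀ x : V → D, objCSP k p xs ≤ objCSP k p x) (v : V) (j : D) : bCSP k p xs v (xs v) ≤ bCSP k p xs v j := by
  have hself := objCSP_update_eq k p hloc xs v (xs v)
  rw [update_eq_self] at hself
  linarith [hopt (update xs v j), objCSP_update_eq k p hloc xs v j]

end

theorem clearcut_correct_general {V D : Type*} [Fintype V] [DecidableEq V] (k : ℕ)
    (hk : 2 ≤ k)
    (hn : (Fintype.card V : ℝ) / k ≤ ((Fintype.card V : ℝ) - k + 1) / ((k : ℝ) - 1))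
    (δ : ℝ) (hδ : 0 < δ)
    (p : Finset V → (V → D) → ℝ)
    (hloc : ∀ (I : Finset V) (x y : V → D), (∀ u ∈ I, x u = y u) → p I x = p I y)
    (hp01 : ∀ I x, 0 ≤ p I x ∧ p I x ≤ 1)
    (xs : V → D) (hopt : ∀ x : V → D, objCSP k p xs ≤ objCSP k p x)
    (x1 : V → D)
    (hdiff : (((univ : Finset V).filter (fun u => x1 u ≠ xs u)).card : ℝ)
      ≤ δ * (Fintype.card V) / (12 * k))
    (x2 : V → D)
    (v : V)
    (hv : ∀ j : D, j ≠ x2 v →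
      bCSP k p x1 v (x2 v) <
        bCSP k p x1 v j - δ * ((Fintype.card V).choose (k - 1)) / 6) :
    x2 v = xs v := by
  by_contra hne
  set n := Fintype.card V
  set t : ℝ := ((#{u | x1 u ≠ xs u} : ℕ) : ℝ)
  have hdrift (i : D) := abs_le.1 (abs_bCSP_sub_le k p hloc hp01 x1 xs v i)
  have hgap : δ * n.choose (k - 1) < 12 * (t * n.choose (k - 2)) := by
    linarith [hv (xs v) (Ne.symm hne), hdrift (xs v), hdrift (x2 v),
      bCSP_self_le_of_forall_objCSP_le k p hloc hopt v (x2 v)]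
  have hk' : (2 : ℝ) ≤ k := by exact_mod_cast hk
  have hk0 : (0 : ℝ) < k := by linarith
  have hkn : k * (k - 2) ≤ n := by
    rw [div_le_div_iff₀ hk0 (by linarith)] at hn
    have : ((k * (k - 2) : ℕ) : ℝ) ≤ n := by push_cast [hk]; nlinarith
    exact_mod_cast this
  have hchoose : (n : ℝ) * n.choose (k - 2) ≤ k * n.choose (k - 1) := by
    exact_mod_cast Nat.mul_choose_sub_two_le hk hkn
  have hdist : 12 * k * t ≤ δ * n := by
    rwa [le_div_iff₀ (by linarith), mul_comm] at hdiff
  have : k * (12 * (t * n.choose (k - 2))) ≤ k * (δ * n.choose (k - 1)) :=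
    calc _ = 12 * k * t * n.choose (k - 2) := by ring
      _ ≤ δ * n * n.choose (k - 2) := mul_le_mul_of_nonneg_right hdist (Nat.cast_nonneg _)
      _ = δ * (n * n.choose (k - 2)) := by ring
      _ ≤ δ * (k * n.choose (k - 1)) := mul_le_mul_of_nonneg_left hchoose hδ.le
      _ = _ := by ring
  exact hgap.not_ge (le_of_mul_le_mul_left this hk0)

/-- if x⁽¹⁾ differs from the optimum x* on at most δn/(12k) variables
and n is large enough that n/k ≤ (n-k+1)/(k-1), then every clear-cut variable
v ∈ C (with x⁽²⁾ the greedy improvement of x⁽¹⁾) satisfies x⁽²⁾_v = x*_v. -/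
theorem clearcut_correct {V D : Type*} [Fintype V] [DecidableEq V] (k : ℕ)
    (hk : 2 ≤ k)
    (hn : (Fintype.card V : ℝ) / k ≤ ((Fintype.card V : ℝ) - k + 1) / ((k : ℝ) - 1))
    (δ : ℝ) (hδ : 0 < δ)
    (p : Finset V → (V → D) → ℝ)
    (hloc : ∀ (I : Finset V) (x y : V → D), (∀ u ∈ I, x u = y u) → p I x = p I y)
    (hp01 : ∀ I x, 0 ≤ p I x ∧ p I x ≤ 1)
    (hdense : ∀ (x : V → D) (v : V) (i j : D), i ≠ j →
      δ * ((Fintype.card V).choose (k - 1)) ≤ bCSP k p x v i + bCSP k p x v j)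
    (xs : V → D) (hopt : ∀ x : V → D, objCSP k p xs ≤ objCSP k p x)
    (x1 : V → D)
    (hdiff : (((univ : Finset V).filter (fun u => x1 u ≠ xs u)).card : ℝ)
      ≤ δ * (Fintype.card V) / (12 * k))
    (x2 : V → D) (hx2 : ∀ (v : V) (i : D), bCSP k p x1 v (x2 v) ≤ bCSP k p x1 v i)
    (v : V)
    (hv : ∀ j : D, j ≠ x2 v →
      bCSP k p x1 v (x2 v) <
        bCSP k p x1 v j - δ * ((Fintype.card V).choose (k - 1)) / 6) :
    x2 v = xs v :=
  clearcut_correct_general k hk hn δ hδ p hloc hp01 xs hopt x1 hdiff x2 v hv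
end

section
/- Fix a partition of the variable set V into C and T with |T| ≥ k, an assignment x⁽²⁾ of V, and for K ∈ binom(T,k) define q_K(y) = ∑_{j=1}^{k} ∑_{J ∈ binom(K,j)} ∑_{L ∈ binom(C,k-j)} p_{J∪L}(R_{Ty}(x⁽²⁾)) · C(|T|-j, k-j)^{-1}. Then for any assignment y of T: Obj(R_{Ty}(x⁽²⁾)) = ∑_{K ∈ binom(T,k)} q_K(y) + ∑_{I ∈ binom(C,k)} p_I(x⁽²⁾). -/
/-! Split each `k`-set `I ⊆ C ∪ T` as `J ∪ L` with `J = I ∩ T` and `L = I ∩ C`. The sets with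
`J = ∅` lie in `C`, where `R_{Ty}(x⁽²⁾)` agrees with `x⁽²⁾`; they give the last sum. A set with
`|J| = j ≥ 1` occurs in `∑_K q_K(y)` once for every `K ∈ binom(T,k)` containing `J`, that is
`C(|T| - j, k - j)` times, and the normalisation in `q_K` cancels this multiplicity. -/

open Finset
open scoped Classical

/-- The padded cost function q_K(y). Here `R` is the combined assignment agreeing
with `y` on `T` and with `x2` elsewhere. -/
noncomputable def qPad {V D : Type*} [Fintype V] [DecidableEq V] (k : ℕ)
    (p : Finset V → (V → D) → ℝ) (Cs T : Finset V) (x2 y : V → D)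
    (K : Finset V) : ℝ :=
  ∑ j ∈ Finset.Icc 1 k, ∑ J ∈ K.powersetCard j, ∑ L ∈ Cs.powersetCard (k - j),
    p (J ∪ L) (fun v => if v ∈ T then y v else x2 v) * (((T.card - j).choose (k - j) : ℝ))⁻¹

theorem sum_powersetCard_union_of_disjoint {α β : Type*} [DecidableEq α] [AddCommMonoid β]
    {s t : Finset α} (hst : Disjoint s t) (n : ℕ) (f : Finset α → β) :
    ∑ I ∈ (s ∪ t).powersetCard n, f I
      = ∑ j ∈ range (n + 1), ∑ J ∈ t.powersetCard j, ∑ L ∈ s.powersetCard (n - j), f (J ∪ L) := by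
  have hsplit {I : Finset α} (h : I ⊆ s ∪ t) : I ∩ t ∪ I ∩ s = I := by
    rw [← inter_union_distrib_left, union_comm, inter_eq_left.2 h]
  calc ∑ I ∈ (s ∪ t).powersetCard n, f I
      = ∑ x ∈ (range (n + 1)).sigma fun j => t.powersetCard j ×ˢ s.powersetCard (n - j),
          f (x.2.1 ∪ x.2.2) := by
        refine sum_nbij' (fun I => ⟨#(I ∩ t), I ∩ t, I ∩ s⟩) (fun x => x.2.1 ∪ x.2.2)
          ?_ ?_ ?_ ?_ ?_
        · intro I h
          simp only [mem_sigma, mem_range, mem_product, mem_powersetCard] at h ⊢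
          have hcard : #(I ∩ t) + #(I ∩ s) = n := by
            rw [← card_union_of_disjoint (hst.symm.mono inter_subset_right inter_subset_right),
              hsplit h.1, h.2]
          exact ⟨by omega, ⟨inter_subset_right, trivial⟩, inter_subset_right, by omega⟩
        · rintro ⟨j, J, L⟩ h
          simp only [mem_sigma, mem_range, mem_product, mem_powersetCard] at h ⊢
          refine ⟨union_subset (h.2.1.1.trans subset_union_right)
            (h.2.2.1.trans subset_union_left), ?_⟩
          rw [card_union_of_disjoint (hst.symm.mono h.2.1.1 h.2.2.1)]
          omega
        · intro I h
          exact hsplit (mem_powersetCard.1 h).1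
        · rintro ⟨j, J, L⟩ h
          simp only [mem_sigma, mem_range, mem_product, mem_powersetCard] at h
          have hJ : (J ∪ L) ∩ t = J := by grind [Finset.disjoint_left]
          have hL : (J ∪ L) ∩ s = L := by grind [Finset.disjoint_left]
          simp only [hJ, hL, h.2.1.2]
        · intro I h
          rw [hsplit (mem_powersetCard.1 h).1]
    _ = _ := by simp_rw [sum_sigma, sum_product]

theorem sum_powersetCard_sum_powersetCard {α β : Type*} [DecidableEq α] [AddCommMonoid β]
    (t : Finset α) {j n : ℕ} (hjn : j ≤ n) (g : Finset α → β) :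
    ∑ K ∈ t.powersetCard n, ∑ J ∈ K.powersetCard j, g J
      = ∑ J ∈ t.powersetCard j, (#t - j).choose (n - j) • g J := by
  rw [sum_comm' (t' := t.powersetCard j) (s' := fun J => {K ∈ t.powersetCard n | J ⊆ K})]
  · refine sum_congr rfl fun J hJ => ?_
    obtain ⟨hJt, rfl⟩ := mem_powersetCard.1 hJ
    rw [sum_const, card_filter_powersetCard_subset J t n hJt hjn]
  · intro K J
    simp only [mem_filter, mem_powersetCard]
    grind

theorem sum_powersetCard_sum_powersetCard_mul_inv_choose {α 𝕜 : Type*} [DecidableEq α]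
    [DivisionRing 𝕜] [CharZero 𝕜] (t : Finset α) {j n : ℕ} (hjn : j ≤ n) (hnt : n ≤ #t)
    (g : Finset α → 𝕜) :
    ∑ K ∈ t.powersetCard n, (∑ J ∈ K.powersetCard j, g J) * ((#t - j).choose (n - j) : 𝕜)⁻¹
      = ∑ J ∈ t.powersetCard j, g J := by
  have hchoose : ((#t - j).choose (n - j) : 𝕜) ≠ 0 :=
    Nat.cast_ne_zero.2 (Nat.choose_pos (by omega)).ne'
  rw [← sum_mul, sum_powersetCard_sum_powersetCard t hjn, ← smul_sum, nsmul_eq_mul,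
    Nat.cast_comm, mul_assoc, mul_inv_cancel₀ hchoose, mul_one]

theorem padded_decomposition_general {V D : Type*} [Fintype V] [DecidableEq V] (k : ℕ)
    (p : Finset V → (V → D) → ℝ)
    (hloc : ∀ (I : Finset V) (x y : V → D), (∀ u ∈ I, x u = y u) → p I x = p I y)
    (Cs T : Finset V) (hdisj : Disjoint Cs T) (hunion : Cs ∪ T = univ)
    (hT : k ≤ T.card)
    (x2 y : V → D) :
    objCSP k p (fun v => if v ∈ T then y v else x2 v)
      = (∑ K ∈ T.powersetCard k, qPad k p Cs T x2 y K)
        + ∑ I ∈ Cs.powersetCard k, p I x2 := by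
  set R : V → D := fun v => if v ∈ T then y v else x2 v
  have hmixed : ∑ K ∈ T.powersetCard k, qPad k p Cs T x2 y K
      = ∑ j ∈ Icc 1 k, ∑ J ∈ T.powersetCard j, ∑ L ∈ Cs.powersetCard (k - j), p (J ∪ L) R := by
    simp only [qPad, ← sum_mul]
    rw [sum_comm]
    exact sum_congr rfl fun j hj =>
      sum_powersetCard_sum_powersetCard_mul_inv_choose T (mem_Icc.1 hj).2 hT _
  have hinside : ∀ L ∈ Cs.powersetCard k, p L R = p L x2 := fun L hL =>
    hloc L R x2 fun u hu => if_neg (disjoint_left.1 hdisj ((mem_powersetCard.1 hL).1 hu))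
  rw [objCSP, ← hunion, sum_powersetCard_union_of_disjoint hdisj, range_eq_Ico,
    sum_eq_sum_Ico_succ_bot (by omega : 0 < k + 1), zero_add, Ico_add_one_right_eq_Icc,
    powersetCard_zero, sum_singleton, Nat.sub_zero, add_comm, hmixed]
  simp only [empty_union]
  exact congrArg _ (sum_congr rfl hinside)

/-- with V partitioned into C and T (|T| ≥ k),
Obj(R_{Ty}(x⁽²⁾)) = ∑_{K ∈ binom(T,k)} q_K(y) + ∑_{I ∈ binom(C,k)} p_I(x⁽²⁾). -/
theorem padded_decomposition {V D : Type*} [Fintype V] [DecidableEq V] (k : ℕ)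
    (hk : 1 ≤ k)
    (p : Finset V → (V → D) → ℝ)
    (hloc : ∀ (I : Finset V) (x y : V → D), (∀ u ∈ I, x u = y u) → p I x = p I y)
    (Cs T : Finset V) (hdisj : Disjoint Cs T) (hunion : Cs ∪ T = univ)
    (hT : k ≤ T.card)
    (x2 y : V → D) :
    objCSP k p (fun v => if v ∈ T then y v else x2 v)
      = (∑ K ∈ T.powersetCard k, qPad k p Cs T x2 y K)
        + ∑ I ∈ Cs.powersetCard k, p I x2 :=
  padded_decomposition_general k p hloc Cs T hdisj hunion hT x2 y
end

section
/- With q_K defined as the padded cost function, one has 0 ≤ q_K(y) ≤ ∑_{j=1}^{k} C(k,j)·C(|C|,k-j)·C(|T|-j,k-j)^{-1} for every K ∈ binom(T,k) and assignment y; in particular q_K(y) = O((|C|/|T|)^{k-1}) for fixed k. -/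
open Finset
open scoped Classical

theorem Finset.sum_powersetCard_sum_powersetCard_le {α : Type*} (K C : Finset α) (a b : ℕ)
    {f : Finset α → Finset α → ℝ} {c : ℝ} (hf : ∀ J L, f J L ≤ c) :
    ∑ J ∈ K.powersetCard a, ∑ L ∈ C.powersetCard b, f J L ≤
      (K.card.choose a : ℝ) * C.card.choose b * c :=
  calc ∑ J ∈ K.powersetCard a, ∑ L ∈ C.powersetCard b, f J L
      ≤ ∑ _J ∈ K.powersetCard a, ∑ _L ∈ C.powersetCard b, c :=
        sum_le_sum fun J _ => sum_le_sum fun L _ => hf J L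
    _ = (K.card.choose a : ℝ) * C.card.choose b * c := by
        simp only [sum_const, card_powersetCard, nsmul_eq_mul, mul_assoc]

section qPad

variable {V D : Type*} [Fintype V] [DecidableEq V] (k : ℕ) (p : Finset V → (V → D) → ℝ)
  (Cs T : Finset V) (x2 y : V → D) (K : Finset V)

theorem qPad_nonneg (hp : ∀ I x, 0 ≤ p I x) : 0 ≤ qPad k p Cs T x2 y K :=
  sum_nonneg fun _ _ => sum_nonneg fun _ _ => sum_nonneg fun _ _ =>
    mul_nonneg (hp _ _) (by positivity)

theorem qPad_le (hp : ∀ I x, p I x ≤ 1) (hK : K.card = k) :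
    qPad k p Cs T x2 y K ≤
      ∑ j ∈ Icc 1 k, (k.choose j : ℝ) * Cs.card.choose (k - j) *
        ((T.card - j).choose (k - j) : ℝ)⁻¹ := by
  refine sum_le_sum fun j _ => hK ▸ sum_powersetCard_sum_powersetCard_le _ _ _ _ fun J L => ?_
  exact mul_le_of_le_one_left (by positivity) (hp _ _)

end qPad

theorem qPad_bound_general {V D : Type*} [Fintype V] [DecidableEq V] (k : ℕ)
    (p : Finset V → (V → D) → ℝ) (hp01 : ∀ I x, 0 ≤ p I x ∧ p I x ≤ 1)
    (Cs T : Finset V)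
    (x2 y : V → D) (K : Finset V) (hK : K ∈ T.powersetCard k) :
    0 ≤ qPad k p Cs T x2 y K ∧
    qPad k p Cs T x2 y K ≤
      ∑ j ∈ Finset.Icc 1 k,
        (k.choose j : ℝ) * ((Cs.card).choose (k - j)) *
          (((T.card - j).choose (k - j) : ℝ))⁻¹ :=
  ⟨qPad_nonneg k p Cs T x2 y K fun I x => (hp01 I x).1,
    qPad_le k p Cs T x2 y K (fun I x => (hp01 I x).2) (mem_powersetCard.mp hK).2⟩

/-- 0 ≤ q_K(y) ≤ ∑_{j=1}^k C(k,j)·C(|C|,k-j)·C(|T|-j,k-j)⁻¹. -/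
theorem qPad_bound {V D : Type*} [Fintype V] [DecidableEq V] (k : ℕ) (hk : 1 ≤ k)
    (p : Finset V → (V → D) → ℝ) (hp01 : ∀ I x, 0 ≤ p I x ∧ p I x ≤ 1)
    (Cs T : Finset V) (hdisj : Disjoint Cs T) (hunion : Cs ∪ T = univ)
    (hT : k ≤ T.card)
    (x2 y : V → D) (K : Finset V) (hK : K ∈ T.powersetCard k) :
    0 ≤ qPad k p Cs T x2 y K ∧
    qPad k p Cs T x2 y K ≤
      ∑ j ∈ Finset.Icc 1 k,
        (k.choose j : ℝ) * ((Cs.card).choose (k - j)) *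
          (((T.card - j).choose (k - j) : ℝ))⁻¹ :=
  qPad_bound_general k p hp01 Cs T x2 y K hK
end

section
/- Hierarchical clustering with a fixed trunk is (1/M)-rigid in the following sense: for an optimal assignment x* of leaves to clusters, every vertex v, and every cluster j ≠ x*_v, b(x*,v,x*_v) + b(x*,v,j) ≥ (1/M)·(|{u ∈ V : x*_u = x*_v}| - 1). -/
open Finset

/-- Pairwise cost of the hierarchical-clustering MIN-2CSP with fixed trunk:
p_{u,v}(a,b) = (1/M)|f(a,b) - F(u,v)|. -/
noncomputable def pHC {V Dc : Type*} (M : ℕ) (f : Dc → Dc → ℕ) (F : V → V → ℕ)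
    (u v : V) (a b : Dc) : ℝ :=
  (1 / (M : ℝ)) * |(f a b : ℝ) - (F u v : ℝ)|

/-- b(x,v,i) = ∑_{u ≠ v} p_{u,v}(x_u, i). -/
noncomputable def bHC {V Dc : Type*} [Fintype V] [DecidableEq V]
    (M : ℕ) (f : Dc → Dc → ℕ) (F : V → V → ℕ) (x : V → Dc) (v : V) (i : Dc) : ℝ :=
  ∑ u ∈ (univ : Finset V).erase v, pHC M f F u v (x u) i

/-- The MIN-2CSP objective, Obj(x) = (1/2)∑_v b(x,v,x_v). -/
noncomputable def objHC {V Dc : Type*} [Fintype V] [DecidableEq V]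
    (M : ℕ) (f : Dc → Dc → ℕ) (F : V → V → ℕ) (x : V → Dc) : ℝ :=
  (1 / 2) * ∑ v : V, bHC M f F x v (x v)

/-!
For a vertex `u ≠ v` in the cluster `i` of `v`, the costs `p_{u,v}(i,i)` and `p_{u,v}(i,j)`
measure the distances of `f(i,i) = 0` and of `f(i,j) ≥ 1` to the same target `F(u,v)`, so by
the triangle inequality they add up to at least `1/M`. Summing over the
`|{u : x*_u = x*_v}| - 1` such vertices, and discarding the nonnegative costs of the others,
gives the claim.
-/

section

variable {V Dc : Type*} (M : ℕ) (f : Dc → Dc → ℕ) (F : V → V → ℕ)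

lemma pHC_nonneg (u v : V) (a b : Dc) : 0 ≤ pHC M f F u v a b := by
  unfold pHC
  positivity

lemma abs_sub_le_pHC_add_pHC (u v : V) (a b c : Dc) :
    1 / (M : ℝ) * |(f a b : ℝ) - f a c| ≤ pHC M f F u v a b + pHC M f F u v a c := by
  rw [pHC, pHC, ← mul_add, abs_sub_comm (f a c : ℝ)]
  exact mul_le_mul_of_nonneg_left (abs_sub_le _ _ _) (by positivity)

lemma one_div_le_pHC_add_pHC (hf0 : ∀ i, f i i = 0) (hf1 : ∀ i j, i ≠ j → 1 ≤ f i j)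
    (u v : V) {a b : Dc} (hab : a ≠ b) :
    1 / (M : ℝ) ≤ pHC M f F u v a a + pHC M f F u v a b := by
  have hdist : (1 : ℝ) ≤ |(f a a : ℝ) - f a b| := by
    rw [hf0, Nat.cast_zero, zero_sub, abs_neg, Nat.abs_cast]
    exact_mod_cast hf1 a b hab
  calc 1 / (M : ℝ) ≤ 1 / (M : ℝ) * |(f a a : ℝ) - f a b| :=
        le_mul_of_one_le_right (by positivity) hdist
    _ ≤ _ := abs_sub_le_pHC_add_pHC M f F u v a a b

lemma card_cluster_mul_le_bHC_add_bHC [Fintype V] [DecidableEq V] [DecidableEq Dc]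
    (hf0 : ∀ i, f i i = 0) (hf1 : ∀ i j, i ≠ j → 1 ≤ f i j)
    (x : V → Dc) (v : V) {i j : Dc} (hij : i ≠ j) :
    (#(((univ : Finset V).erase v).filter (fun u => x u = i)) : ℝ) * (1 / (M : ℝ))
      ≤ bHC M f F x v i + bHC M f F x v j := by
  rw [bHC, bHC, ← sum_add_distrib, ← nsmul_eq_mul]
  calc _ ≤ ∑ u ∈ ((univ : Finset V).erase v).filter (fun u => x u = i),
          (pHC M f F u v (x u) i + pHC M f F u v (x u) j) := by
        refine card_nsmul_le_sum _ _ _ fun u hu => ?_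
        rw [(mem_filter.mp hu).2]
        exact one_div_le_pHC_add_pHC M f F hf0 hf1 u v hij
    _ ≤ _ := sum_le_sum_of_subset_of_nonneg (filter_subset _ _) fun u _ _ =>
        add_nonneg (pHC_nonneg M f F _ _ _ _) (pHC_nonneg M f F _ _ _ _)

end

theorem hc_rigid_general {V Dc : Type*} [Fintype V] [DecidableEq V] [DecidableEq Dc]
    (M : ℕ)
    (f : Dc → Dc → ℕ) (hf0 : ∀ i, f i i = 0) (hf1 : ∀ i j, i ≠ j → 1 ≤ f i j)
    (F : V → V → ℕ)
    (xs : V → Dc)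
    (v : V) (j : Dc) (hj : j ≠ xs v) :
    (1 / (M : ℝ)) * ((((univ : Finset V).filter (fun u => xs u = xs v)).card : ℝ) - 1)
      ≤ bHC M f F xs v (xs v) + bHC M f F xs v j := by
  have hcard : (#(((univ : Finset V).erase v).filter (fun u => xs u = xs v)) : ℝ)
      = #((univ : Finset V).filter (fun u => xs u = xs v)) - 1 := by
    rw [filter_erase, card_erase_of_mem (by simp), Nat.cast_pred (card_pos.mpr ⟨v, by simp⟩)]
  rw [← hcard, mul_comm]
  exact card_cluster_mul_le_bHC_add_bHC M f F hf0 hf1 xs v hj.symm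

/-- hierarchical clustering with a fixed trunk is (1/M)-rigid:
for an optimal x*, every v and every cluster j ≠ x*_v,
b(x*,v,x*_v) + b(x*,v,j) ≥ (1/M)(|{u : x*_u = x*_v}| - 1). -/
theorem hc_rigid {V Dc : Type*} [Fintype V] [DecidableEq V] [DecidableEq Dc]
    (M : ℕ) (hM : 1 ≤ M)
    (f : Dc → Dc → ℕ) (hf0 : ∀ i, f i i = 0) (hf1 : ∀ i j, i ≠ j → 1 ≤ f i j)
    (F : V → V → ℕ) (hF : ∀ u v, F u v ≤ M)
    (xs : V → Dc) (hopt : ∀ x : V → Dc, objHC M f F xs ≤ objHC M f F x)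
    (v : V) (j : Dc) (hj : j ≠ xs v) :
    (1 / (M : ℝ)) * ((((univ : Finset V).filter (fun u => xs u = xs v)).card : ℝ) - 1)
      ≤ bHC M f F xs v (xs v) + bHC M f F xs v j :=
  hc_rigid_general M f hf0 hf1 F xs v j hj
end

section
/- In a δ-rigid MIN-2CSP with optimal assignment x*, every δc/3-unclear vertex v lying in an optimal cluster of size at least c satisfies b(x*,v,x*_v) ≥ δc/3, and hence the number of such vertices is at most 6·OPT/(δc). -/
open Finset
open scoped Classical

/-! Rigidity bounds the sum of the two costs of a vertex from below by `δ` times its cluster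
size `|C|`, and unclearness says the cost of the alternative label exceeds the own cost by at
most `δc/3`; together they leave `2·b(x*,v,x*_v) ≥ δ|C| - δc/3 ≥ 2δc/3`. Summing this bound over
the unclear vertices and comparing with `∑_v b(x*,v,x*_v) = 2·OPT` gives the count. -/

/-- b(x,v,i) = ∑_{u ≠ v} p_{u,v}(x_u, i) for a MIN-2CSP. -/
noncomputable def b2 {V D : Type*} [Fintype V] [DecidableEq V]
    (p : V → V → D → D → ℝ) (x : V → D) (v : V) (i : D) : ℝ :=
  ∑ u ∈ (univ : Finset V).erase v, p u v (x u) i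

theorem b2_nonneg {V D : Type*} [Fintype V] [DecidableEq V] {p : V → V → D → D → ℝ}
    (hp : ∀ u v a b, 0 ≤ p u v a b) (x : V → D) (v : V) (i : D) : 0 ≤ b2 p x v i :=
  sum_nonneg fun u _ => hp u v (x u) i

theorem le_b2_of_rigid_of_unclear {V D : Type*} [Fintype V] [DecidableEq V] [DecidableEq D]
    {p : V → V → D → D → ℝ} {x : V → D} {v : V} {j : D} {δ c : ℝ} (hδ : 0 ≤ δ)
    (hrigid : δ * (#(univ.filter fun u => x u = x v) : ℝ) ≤ b2 p x v (x v) + b2 p x v j)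
    (hunclear : b2 p x v j - δ * c / 3 ≤ b2 p x v (x v))
    (hcard : c ≤ (#(univ.filter fun u => x u = x v) : ℝ)) :
    δ * c / 3 ≤ b2 p x v (x v) := by
  have : δ * c ≤ δ * (#(univ.filter fun u => x u = x v) : ℝ) :=
    mul_le_mul_of_nonneg_left hcard hδ
  linarith

theorem card_filter_mul_le_sum {ι : Type*} [Fintype ι] {P : ι → Prop} [DecidablePred P]
    {f : ι → ℝ} {t : ℝ} (hf : ∀ i, 0 ≤ f i) (hP : ∀ i, P i → t ≤ f i) :
    (#(univ.filter P) : ℝ) * t ≤ ∑ i, f i :=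
  calc (#(univ.filter P) : ℝ) * t = ∑ _i ∈ univ.filter P, t := by
        rw [sum_const, nsmul_eq_mul]
    _ ≤ ∑ i ∈ univ.filter P, f i := sum_le_sum fun i hi => hP i (mem_filter.mp hi).2
    _ ≤ ∑ i, f i := sum_le_sum_of_subset_of_nonneg (subset_univ _) fun i _ _ => hf i

/-- in a δ-rigid MIN-2CSP with optimum x* and OPT = (1/2)∑_v b(x*,v,x*_v),
every δc/3-unclear vertex v in an optimal cluster of size at least c has
b(x*,v,x*_v) ≥ δc/3, and the number of such vertices is at most 6·OPT/(δc). -/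
theorem few_unclear_rigid {V D : Type*} [Fintype V] [DecidableEq V] [DecidableEq D]
    (p : V → V → D → D → ℝ) (hp : ∀ u v a b, 0 ≤ p u v a b ∧ p u v a b ≤ 1)
    (δ c : ℝ) (hδ : 0 < δ) (hc : 0 < c)
    (xs : V → D)
    (hrigid : ∀ (v : V) (j : D), j ≠ xs v →
      δ * (((univ : Finset V).filter (fun u => xs u = xs v)).card : ℝ)
        ≤ b2 p xs v (xs v) + b2 p xs v j) :
    (∀ v : V,
      (∃ j, j ≠ xs v ∧ b2 p xs v j - δ * c / 3 ≤ b2 p xs v (xs v)) →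
      c ≤ (((univ : Finset V).filter (fun u => xs u = xs v)).card : ℝ) →
      δ * c / 3 ≤ b2 p xs v (xs v)) ∧
    ((((univ : Finset V).filter (fun v =>
        (∃ j, j ≠ xs v ∧ b2 p xs v j - δ * c / 3 ≤ b2 p xs v (xs v)) ∧
        c ≤ (((univ : Finset V).filter (fun u => xs u = xs v)).card : ℝ))).card : ℝ)
      ≤ 6 * ((1 / 2) * ∑ v : V, b2 p xs v (xs v)) / (δ * c)) := by
  have unclear_bound : ∀ v : V,
      (∃ j, j ≠ xs v ∧ b2 p xs v j - δ * c / 3 ≤ b2 p xs v (xs v)) →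
      c ≤ (((univ : Finset V).filter (fun u => xs u = xs v)).card : ℝ) →
      δ * c / 3 ≤ b2 p xs v (xs v) := fun v ⟨j, hj, hunclear⟩ hcard =>
    le_b2_of_rigid_of_unclear hδ.le (hrigid v j hj) hunclear hcard
  refine ⟨unclear_bound, ?_⟩
  have hsum := card_filter_mul_le_sum
    (fun v => b2_nonneg (fun u v a b => (hp u v a b).1) xs v (xs v))
    fun v (hv : _ ∧ _) => unclear_bound v hv.1 hv.2
  rw [le_div_iff₀ (mul_pos hδ hc)]
  linarith
end
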